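/- arXiv:0906.1312 — 3 statements merged into one kernel-verified Lean document; each statement's English description precedes it below -/
import Mathlib

section
/- Let μ ∈ {−1,1}, let U ⊆ ℝ³ be open (coordinates indexed by 0,1,2, with ∂_m the partial derivative in the m-th coordinate), and let s, v, w : U → ℝ³ be C² maps satisfying at every point of U: s ·_μ s = μ, v ·_μ v = 1, v ·_μ s = 0, and w = s ×_μ v. Define ψ_m = v ·_μ ∂_m s + i w ·_μ ∂_m s : U → ℂ and A_m = w ·_μ ∂_m v : U → ℝ for m = 0,1,2. Then for all l, m ∈ {0,1,2} the curvature relation ∂_l A_m − ∂_m A_l = μ Im(ψ_l · conj(ψ_m)) holds on U. -/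
noncomputable section

/-- The inner product `v ·_μ w = μ v₀ w₀ + v₁ w₁ + v₂ w₂` on `ℝ³`. -/
def mdot (μ : ℝ) (v w : Fin 3 → ℝ) : ℝ :=
  μ * v 0 * w 0 + v 1 * w 1 + v 2 * w 2

/-- The standard cross product on `ℝ³`. -/
def cross3 (v w : Fin 3 → ℝ) : Fin 3 → ℝ :=
  ![v 1 * w 2 - v 2 * w 1, v 2 * w 0 - v 0 * w 2, v 0 * w 1 - v 1 * w 0]

/-- The cross product `v ×_μ w = η_μ · (v × w)`, where `η_μ = diag(μ,1,1)`. -/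
def mcross (μ : ℝ) (v w : Fin 3 → ℝ) : Fin 3 → ℝ :=
  ![μ * cross3 v w 0, cross3 v w 1, cross3 v w 2]

/-- Partial derivative in the `m`-th coordinate of an `ℝ³`-valued map on `ℝ³`. -/
def pdV (m : Fin 3) (f : (Fin 3 → ℝ) → (Fin 3 → ℝ)) (x : Fin 3 → ℝ) : Fin 3 → ℝ :=
  fderiv ℝ f x (Pi.single m 1)

/-- Partial derivative in the `m`-th coordinate of a real-valued map on `ℝ³`. -/
def pdR (m : Fin 3) (f : (Fin 3 → ℝ) → ℝ) (x : Fin 3 → ℝ) : ℝ :=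
  fderiv ℝ f x (Pi.single m 1)

/-!
The `A_m = w · ∂_m v` are the connection coefficients of the `η_μ`-orthonormal frame `(s, v, w)`.
By symmetry of second derivatives, `∂_l A_m - ∂_m A_l = ∂_l w · ∂_m v - ∂_m w · ∂_l v`. Expanding
`∂_m v` in the frame, its `v`-component vanishes (`v · v = 1`), its `w`-component meets
`∂_l w · w = 0` (`w · w = 1`), and differentiating `v · s = 0` and `w · s = 0` turns the remaining
`s`-components into `-v · ∂_m s` and `-w · ∂_l s`, which are the real and imaginary parts of `ψ`.
-/

open Filter Topology

section Algebra

variable {μ : ℝ}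

lemma mdot_comm (μ : ℝ) (a b : Fin 3 → ℝ) : mdot μ a b = mdot μ b a := by
  unfold mdot; ring

lemma mdot_mcross_left (hμ : μ * μ = 1) (s v : Fin 3 → ℝ) : mdot μ (mcross μ s v) s = 0 := by
  simp only [mdot, mcross, cross3, Matrix.cons_val]
  linear_combination (s 0 * (s 1 * v 2 - s 2 * v 1)) * hμ

lemma mdot_mcross_mcross (hμ : μ * μ = 1) (s v : Fin 3 → ℝ) :
    mdot μ (mcross μ s v) (mcross μ s v) = μ * (mdot μ s s * mdot μ v v - mdot μ s v ^ 2) := by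
  simp only [mdot, mcross, cross3, Matrix.cons_val]
  linear_combination (μ * (s 1 * v 2 - s 2 * v 1) ^ 2 - (s 2 * v 0 - s 0 * v 2) ^ 2
    - (s 0 * v 1 - s 1 * v 0) ^ 2) * hμ

/-- Since `μ² = 1`, `x ·_μ (s ×_μ v) = det (x, s, v)`, and `det (Xᵀ η_μ Y) = μ det X det Y`. -/
lemma mdot_mcross_mul_mdot_mcross (hμ : μ * μ = 1) (s v x y : Fin 3 → ℝ) :
    mdot μ x (mcross μ s v) * mdot μ y (mcross μ s v) =
      μ * !![mdot μ x y, mdot μ x s, mdot μ x v;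
             mdot μ s y, mdot μ s s, mdot μ s v;
             mdot μ v y, mdot μ v s, mdot μ v v].det := by
  rw [Matrix.det_fin_three]
  obtain rfl | rfl := mul_self_eq_one_iff.1 hμ <;>
  · simp only [mdot, mcross, cross3, Matrix.of_apply, Matrix.cons_val', Matrix.cons_val,
      Matrix.cons_val_zero, Matrix.cons_val_one, Matrix.empty_val', Matrix.cons_val_fin_one]
    ring

lemma mdot_eq_frame_expansion (hμ : μ * μ = 1) {s v : Fin 3 → ℝ} (hss : mdot μ s s = μ)
    (hvv : mdot μ v v = 1) (hvs : mdot μ v s = 0) (x y : Fin 3 → ℝ) :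
    mdot μ x y = μ * mdot μ x s * mdot μ y s + mdot μ x v * mdot μ y v
      + mdot μ x (mcross μ s v) * mdot μ y (mcross μ s v) := by
  have hsv : mdot μ s v = 0 := by rw [mdot_comm, hvs]
  rw [mdot_mcross_mul_mdot_mcross hμ, hss, hvv, hvs, hsv, Matrix.det_fin_three]
  simp only [Matrix.of_apply, Matrix.cons_val', Matrix.cons_val, Matrix.cons_val_zero,
    Matrix.cons_val_one, Matrix.empty_val', Matrix.cons_val_fin_one, mdot_comm μ s y,
    mdot_comm μ v y]
  linear_combination (mdot μ x v * mdot μ y v - mdot μ x y) * hμ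

end Algebra

section Calculus

variable {E : Type*} [NormedAddCommGroup E] [NormedSpace ℝ E] {μ : ℝ}
  {f g s v w : E → Fin 3 → ℝ} {x : E}

lemma fderiv_mdot_apply (μ : ℝ) (hf : DifferentiableAt ℝ f x) (hg : DifferentiableAt ℝ g x)
    (u : E) :
    fderiv ℝ (fun y => mdot μ (f y) (g y)) x u =
      mdot μ (fderiv ℝ f x u) (g x) + mdot μ (f x) (fderiv ℝ g x u) := by
  have hf' := hasFDerivAt_pi'.1 hf.hasFDerivAt
  have hg' := hasFDerivAt_pi'.1 hg.hasFDerivAt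
  have H : HasFDerivAt (fun y => mdot μ (f y) (g y)) _ x :=
    ((((hf' 0).const_mul μ).mul (hg' 0)).add ((hf' 1).mul (hg' 1))).add ((hf' 2).mul (hg' 2))
  rw [H.fderiv]
  simp only [add_apply, smul_apply, ContinuousLinearMap.comp_apply,
    ContinuousLinearMap.proj_apply, smul_eq_mul, mdot]
  ring

lemma mdot_fderiv_add_mdot_fderiv_eq_zero {c : ℝ} (hf : DifferentiableAt ℝ f x)
    (hg : DifferentiableAt ℝ g x) (hc : ∀ᶠ y in 𝓝 x, mdot μ (f y) (g y) = c) (u : E) :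
    mdot μ (fderiv ℝ f x u) (g x) + mdot μ (f x) (fderiv ℝ g x u) = 0 := by
  have hc' : (fun y => mdot μ (f y) (g y)) =ᶠ[𝓝 x] fun _ => c := hc
  rw [← fderiv_mdot_apply μ hf hg, hc'.fderiv_eq, fderiv_const_apply]
  rfl

lemma fderiv_mdot_fderiv_sub_fderiv_mdot_fderiv (μ : ℝ) (hw : DifferentiableAt ℝ w x)
    (hv : ContDiffAt ℝ 2 v x) (a b : E) :
    fderiv ℝ (fun y => mdot μ (w y) (fderiv ℝ v y b)) x a
        - fderiv ℝ (fun y => mdot μ (w y) (fderiv ℝ v y a)) x b =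
      mdot μ (fderiv ℝ w x a) (fderiv ℝ v x b) - mdot μ (fderiv ℝ w x b) (fderiv ℝ v x a) := by
  have hv' : DifferentiableAt ℝ (fderiv ℝ v) x :=
    (hv.fderiv_right (m := 1) (by norm_num)).differentiableAt one_ne_zero
  have hsnd (a b : E) :
      fderiv ℝ (fun y => fderiv ℝ v y b) x a = fderiv ℝ (fderiv ℝ v) x a b := by
    rw [fderiv_clm_apply hv' (differentiableAt_const b)]
    simp
  have hvb (b : E) : DifferentiableAt ℝ (fun y => fderiv ℝ v y b) x :=
    hv'.clm_apply (differentiableAt_const b)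
  rw [fderiv_mdot_apply μ hw (hvb b), fderiv_mdot_apply μ hw (hvb a), hsnd, hsnd,
    hv.isSymmSndFDerivAt (by simp) a b]
  ring

lemma mdot_fderiv_mcross_fderiv (hμ : μ * μ = 1) (hs : DifferentiableAt ℝ s x)
    (hv : DifferentiableAt ℝ v x) (hw : DifferentiableAt ℝ w x)
    (hss : ∀ᶠ y in 𝓝 x, mdot μ (s y) (s y) = μ) (hvv : ∀ᶠ y in 𝓝 x, mdot μ (v y) (v y) = 1)
    (hvs : ∀ᶠ y in 𝓝 x, mdot μ (v y) (s y) = 0)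
    (hwsv : ∀ᶠ y in 𝓝 x, w y = mcross μ (s y) (v y)) (a b : E) :
    mdot μ (fderiv ℝ w x a) (fderiv ℝ v x b) =
      μ * mdot μ (w x) (fderiv ℝ s x a) * mdot μ (v x) (fderiv ℝ s x b) := by
  have hww : ∀ᶠ y in 𝓝 x, mdot μ (w y) (w y) = 1 := by
    filter_upwards [hss, hvv, hvs, hwsv] with y hss hvv hvs hwsv
    rw [hwsv, mdot_mcross_mcross hμ, hss, hvv, mdot_comm, hvs]
    linear_combination hμ
  have hws : ∀ᶠ y in 𝓝 x, mdot μ (w y) (s y) = 0 := by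
    filter_upwards [hwsv] with y hwsv
    rw [hwsv, mdot_mcross_left hμ]
  have dww := mdot_fderiv_add_mdot_fderiv_eq_zero hw hw hww a
  have dws := mdot_fderiv_add_mdot_fderiv_eq_zero hw hs hws a
  have dvv := mdot_fderiv_add_mdot_fderiv_eq_zero hv hv hvv b
  have dvs := mdot_fderiv_add_mdot_fderiv_eq_zero hv hs hvs b
  rw [mdot_comm μ (w x)] at dww
  rw [mdot_comm μ (v x)] at dvv
  rw [mdot_eq_frame_expansion hμ hss.self_of_nhds hvv.self_of_nhds hvs.self_of_nhds,
    ← hwsv.self_of_nhds]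
  linear_combination μ * mdot μ (fderiv ℝ v x b) (s x) * dws
    - μ * mdot μ (w x) (fderiv ℝ s x a) * dvs
    + mdot μ (fderiv ℝ w x a) (v x) / 2 * dvv + mdot μ (fderiv ℝ v x b) (w x) / 2 * dww

end Calculus

lemma Complex.im_mul_conj_ofReal_add_I_mul (a b c d : ℝ) :
    ((a + I * b : ℂ) * (starRingEnd ℂ) (c + I * d)).im = b * c - a * d := by
  simp only [map_add, map_mul, conj_ofReal, conj_I, add_re, add_im, mul_re, mul_im, neg_re,
    neg_im, ofReal_re, ofReal_im, I_re, I_im]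
  ring

theorem stmt5 (μ : ℝ) (hμ : μ = 1 ∨ μ = -1)
    (U : Set (Fin 3 → ℝ)) (hU : IsOpen U)
    (s v w : (Fin 3 → ℝ) → (Fin 3 → ℝ))
    (hs : ContDiffOn ℝ 2 s U) (hv : ContDiffOn ℝ 2 v U) (hw : ContDiffOn ℝ 2 w U)
    (h1 : ∀ x ∈ U, mdot μ (s x) (s x) = μ)
    (h2 : ∀ x ∈ U, mdot μ (v x) (v x) = 1)
    (h3 : ∀ x ∈ U, mdot μ (v x) (s x) = 0)
    (h4 : ∀ x ∈ U, w x = mcross μ (s x) (v x))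
    (ψ : Fin 3 → (Fin 3 → ℝ) → ℂ)
    (hψ : ∀ m x, ψ m x =
      (mdot μ (v x) (pdV m s x) : ℂ) + Complex.I * (mdot μ (w x) (pdV m s x) : ℂ))
    (A : Fin 3 → (Fin 3 → ℝ) → ℝ)
    (hA : ∀ m x, A m x = mdot μ (w x) (pdV m v x)) :
    ∀ l m : Fin 3, ∀ x ∈ U,
      pdR l (A m) x - pdR m (A l) x = μ * (ψ l x * (starRingEnd ℂ) (ψ m x)).im := by
  intro l m x hx
  have hxU := hU.mem_nhds hx
  have hμ' : μ * μ = 1 := by rcases hμ with rfl | rfl <;> norm_num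
  have hv₂ := hv.contDiffAt hxU
  have hsd := (hs.contDiffAt hxU).differentiableAt two_ne_zero
  have hwd := (hw.contDiffAt hxU).differentiableAt two_ne_zero
  have frame := mdot_fderiv_mcross_fderiv hμ' hsd (hv₂.differentiableAt two_ne_zero) hwd
    (eventually_of_mem hxU h1) (eventually_of_mem hxU h2) (eventually_of_mem hxU h3)
    (eventually_of_mem hxU h4)
  rw [funext (hA m), funext (hA l), hψ, hψ, Complex.im_mul_conj_ofReal_add_I_mul]
  simp only [pdR, pdV]
  rw [fderiv_mdot_fderiv_sub_fderiv_mdot_fderiv μ hwd hv₂, frame, frame]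
  ring
end
end

section
/- Let μ, ε ∈ {−1,1}, let U ⊆ ℝ³ be open (coordinates indexed by 0,1,2, where the 0-th coordinate plays the role of time and ∂_m denotes the partial derivative in the m-th coordinate). Let ψ_0 : U → ℂ be C¹, ψ_1, ψ_2 : U → ℂ be C², A_0, A_1, A_2 : U → ℝ be C¹, and ζ_1, ζ_2 : U → ℝ be C¹. Write D_j φ = ∂_j φ + i A_j φ and q_{lm} = μ Im(ψ_l · conj(ψ_m)). Assume that on U: (i) D_l ψ_m = D_m ψ_l for all l, m ∈ {0,1,2}; (ii) ∂_l A_m − ∂_m A_l = q_{lm} for all l, m ∈ {0,1,2}; and (iii) ψ_0 = i(D_1 ψ_1 + ε D_2 ψ_2) + ζ_2 ψ_1 − ε ζ_1 ψ_2. Then for m = 1, 2 one has on U: ∂_0 ψ_m − i(∂_1∂_1 + ε ∂_2∂_2) ψ_m = (ζ_2 − 2A_1) ∂_1 ψ_m − ε (ζ_1 + 2A_2) ∂_2 ψ_m − q_{m1} ψ_1 − ε q_{m2} ψ_2 + ψ_1 ∂_m ζ_2 − ε ψ_2 ∂_m ζ_1 + ψ_m (−∂_1 A_1 − ε ∂_2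 A_2 − i A_1² − i ε A_2² + i ζ_2 A_1 − i ε ζ_1 A_2 − i A_0). -/
noncomputable section

/-- Partial derivative in the `m`-th coordinate of a `ℂ`-valued map on `ℝ³`. -/
def pdC (m : Fin 3) (f : (Fin 3 → ℝ) → ℂ) (x : Fin 3 → ℝ) : ℂ :=
  fderiv ℝ f x (Pi.single m 1)

/-! Since `D_0 ψ_m = D_m ψ_0`, we have `∂_0 ψ_m = D_m ψ_0 - i A_0 ψ_m`. Inserting the formula for
`ψ_0`, the Leibniz rule reduces `D_m ψ_0` to the terms `D_m D_l ψ_l` (`l = 1, 2`). The commutator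
`[D_m, D_l] = i (∂_m A_l - ∂_l A_m) = i q_{ml}` and the curl relation `D_m ψ_l = D_l ψ_m` turn these
into `D_l D_l ψ_m + i q_{ml} ψ_l`, and expanding
`D_l D_l = ∂_l ∂_l + 2 i A_l ∂_l + i ∂_l A_l - A_l²` gives the equation. -/

open Complex Filter Topology

variable {f g : (Fin 3 → ℝ) → ℂ} {a : (Fin 3 → ℝ) → ℝ} {x : Fin 3 → ℝ} {j l m : Fin 3}

lemma pdC_congr (h : f =ᶠ[𝓝 x] g) : pdC j f x = pdC j g x := by
  rw [pdC, pdC, h.fderiv_eq]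

lemma pdC_add (hf : DifferentiableAt ℝ f x) (hg : DifferentiableAt ℝ g x) :
    pdC j (fun y => f y + g y) x = pdC j f x + pdC j g x := by
  simp only [pdC, fderiv_fun_add hf hg, add_apply]

lemma pdC_sub (hf : DifferentiableAt ℝ f x) (hg : DifferentiableAt ℝ g x) :
    pdC j (fun y => f y - g y) x = pdC j f x - pdC j g x := by
  simp only [pdC, fderiv_fun_sub hf hg, sub_apply]

lemma pdC_const_mul (c : ℂ) (hf : DifferentiableAt ℝ f x) :
    pdC j (fun y => c * f y) x = c * pdC j f x := by
  simp only [pdC, fderiv_const_mul hf, smul_apply, smul_eq_mul]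

lemma pdC_mul (hf : DifferentiableAt ℝ f x) (hg : DifferentiableAt ℝ g x) :
    pdC j (fun y => f y * g y) x = pdC j f x * g x + f x * pdC j g x := by
  simp only [pdC, fderiv_fun_mul hf hg, add_apply, smul_apply, smul_eq_mul]
  ring

lemma pdC_ofReal (ha : DifferentiableAt ℝ a x) : pdC j (fun y => (a y : ℂ)) x = pdR j a x := by
  have : HasFDerivAt (fun y => (a y : ℂ)) (ofRealCLM.comp (fderiv ℝ a x)) x :=
    ofRealCLM.hasFDerivAt.comp x ha.hasFDerivAt
  rw [pdC, this.fderiv]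
  rfl

lemma differentiableAt_ofReal (ha : DifferentiableAt ℝ a x) :
    DifferentiableAt ℝ (fun y => (a y : ℂ)) x :=
  ofRealCLM.differentiableAt.comp x ha

lemma differentiableAt_pdC (hf : ContDiffAt ℝ 2 f x) : DifferentiableAt ℝ (pdC j f) x :=
  ((hf.fderiv_right (m := 1) le_rfl).differentiableAt one_ne_zero).clm_apply
    (differentiableAt_const _)

lemma pdC_pdC (hf : ContDiffAt ℝ 2 f x) :
    pdC l (pdC m f) x = fderiv ℝ (fderiv ℝ f) x (Pi.single l 1) (Pi.single m 1) := by
  have hdf : DifferentiableAt ℝ (fderiv ℝ f) x :=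
    (hf.fderiv_right (m := 1) le_rfl).differentiableAt one_ne_zero
  change fderiv ℝ (fun y => fderiv ℝ f y (Pi.single m 1)) x (Pi.single l 1) = _
  rw [fderiv_clm_apply hdf (differentiableAt_const _)]
  simp

lemma pdC_pdC_comm (hf : ContDiffAt ℝ 2 f x) : pdC l (pdC m f) x = pdC m (pdC l f) x := by
  rw [pdC_pdC hf, pdC_pdC hf, hf.isSymmSndFDerivAt (by simp)]

def covD (A : Fin 3 → (Fin 3 → ℝ) → ℝ) (j : Fin 3) (φ : (Fin 3 → ℝ) → ℂ) :
    (Fin 3 → ℝ) → ℂ :=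
  fun x => pdC j φ x + I * (A j x : ℂ) * φ x

section covD

variable {A : Fin 3 → (Fin 3 → ℝ) → ℝ}

lemma covD_congr (h : f =ᶠ[𝓝 x] g) : covD A j f x = covD A j g x := by
  simp only [covD, pdC_congr h, h.eq_of_nhds]

lemma differentiableAt_covD (hf : ContDiffAt ℝ 2 f x) (hA : DifferentiableAt ℝ (A j) x) :
    DifferentiableAt ℝ (covD A j f) x :=
  (differentiableAt_pdC hf).add
    (((differentiableAt_ofReal hA).const_mul I).mul (hf.differentiableAt two_ne_zero))

lemma covD_add (hf : DifferentiableAt ℝ f x) (hg : DifferentiableAt ℝ g x) :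
    covD A j (fun y => f y + g y) x = covD A j f x + covD A j g x := by
  simp only [covD, pdC_add hf hg]
  ring

lemma covD_sub (hf : DifferentiableAt ℝ f x) (hg : DifferentiableAt ℝ g x) :
    covD A j (fun y => f y - g y) x = covD A j f x - covD A j g x := by
  simp only [covD, pdC_sub hf hg]
  ring

lemma covD_const_mul (c : ℂ) (hf : DifferentiableAt ℝ f x) :
    covD A j (fun y => c * f y) x = c * covD A j f x := by
  simp only [covD, pdC_const_mul c hf]
  ring

lemma covD_mul (hf : DifferentiableAt ℝ f x) (hg : DifferentiableAt ℝ g x) :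
    covD A j (fun y => f y * g y) x = pdC j f x * g x + f x * covD A j g x := by
  simp only [covD, pdC_mul hf hg]
  ring

lemma covD_covD (hf : ContDiffAt ℝ 2 f x) (hA : DifferentiableAt ℝ (A m) x) :
    covD A l (covD A m f) x = pdC l (pdC m f) x + I * A l x * pdC m f x
      + I * A m x * pdC l f x + I * pdR l (A m) x * f x - A l x * A m x * f x := by
  have hf₁ := hf.differentiableAt two_ne_zero
  have hIA : DifferentiableAt ℝ (fun y => I * (A m y : ℂ)) x :=
    (differentiableAt_ofReal hA).const_mul I
  have hIAf : DifferentiableAt ℝ (fun y => I * (A m y : ℂ) * f y) x := hIA.mul hf₁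
  unfold covD
  rw [pdC_add (differentiableAt_pdC hf) hIAf, pdC_mul hIA hf₁, pdC_const_mul I
    (differentiableAt_ofReal hA), pdC_ofReal hA]
  linear_combination (A l x * A m x * f x : ℂ) * I_sq

lemma covD_covD_comm (hf : ContDiffAt ℝ 2 f x) (hAl : DifferentiableAt ℝ (A l) x)
    (hAm : DifferentiableAt ℝ (A m) x) :
    covD A l (covD A m f) x
      = covD A m (covD A l f) x + I * ((pdR l (A m) x - pdR m (A l) x : ℝ) : ℂ) * f x := by
  rw [covD_covD hf hAm, covD_covD hf hAl, pdC_pdC_comm hf]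
  push_cast
  ring

lemma covD_covD_of_curl (hf : ContDiffAt ℝ 2 f x) (hAl : DifferentiableAt ℝ (A l) x)
    (hAm : DifferentiableAt ℝ (A m) x) (hcurl : covD A m f =ᶠ[𝓝 x] covD A l g) :
    covD A m (covD A l f) x
      = covD A l (covD A l g) x + I * ((pdR m (A l) x - pdR l (A m) x : ℝ) : ℂ) * f x := by
  rw [covD_covD_comm hf hAm hAl, covD_congr hcurl]

def timeComponent (A : Fin 3 → (Fin 3 → ℝ) → ℝ) (ε : ℂ) (ζ₁ ζ₂ : (Fin 3 → ℝ) → ℝ)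
    (φ₁ φ₂ : (Fin 3 → ℝ) → ℂ) : (Fin 3 → ℝ) → ℂ :=
  fun y => I * (covD A 1 φ₁ y + ε * covD A 2 φ₂ y) + ζ₂ y * φ₁ y - ε * (ζ₁ y * φ₂ y)

lemma covD_timeComponent {ζ₁ ζ₂ : (Fin 3 → ℝ) → ℝ} {φ₁ φ₂ : (Fin 3 → ℝ) → ℂ} (ε : ℂ)
    (hφ₁ : ContDiffAt ℝ 2 φ₁ x) (hφ₂ : ContDiffAt ℝ 2 φ₂ x)
    (hA₁ : DifferentiableAt ℝ (A 1) x) (hA₂ : DifferentiableAt ℝ (A 2) x)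
    (hζ₁ : DifferentiableAt ℝ ζ₁ x) (hζ₂ : DifferentiableAt ℝ ζ₂ x) :
    covD A m (timeComponent A ε ζ₁ ζ₂ φ₁ φ₂) x
      = I * (covD A m (covD A 1 φ₁) x + ε * covD A m (covD A 2 φ₂) x)
        + (pdR m ζ₂ x * φ₁ x + ζ₂ x * covD A m φ₁ x)
        - ε * (pdR m ζ₁ x * φ₂ x + ζ₁ x * covD A m φ₂ x) := by
  have hD₁ := differentiableAt_covD hφ₁ hA₁
  have hD₂ := differentiableAt_covD hφ₂ hA₂
  have hφ₁' := hφ₁.differentiableAt two_ne_zero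
  have hφ₂' := hφ₂.differentiableAt two_ne_zero
  have hζ₁' := differentiableAt_ofReal hζ₁
  have hζ₂' := differentiableAt_ofReal hζ₂
  unfold timeComponent
  rw [covD_sub, covD_add, covD_const_mul, covD_add, covD_const_mul, covD_mul,
    covD_const_mul, covD_mul, pdC_ofReal hζ₂, pdC_ofReal hζ₁]
  all_goals fun_prop

end covD

theorem stmt11_general (ε : ℝ)
    (U : Set (Fin 3 → ℝ)) (hU : IsOpen U)
    (ψ : Fin 3 → (Fin 3 → ℝ) → ℂ)
    (hψ1 : ContDiffOn ℝ 2 (ψ 1) U) (hψ2 : ContDiffOn ℝ 2 (ψ 2) U)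
    (A : Fin 3 → (Fin 3 → ℝ) → ℝ) (hA : ∀ m, ContDiffOn ℝ 1 (A m) U)
    (ζ1 ζ2 : (Fin 3 → ℝ) → ℝ) (hζ1 : ContDiffOn ℝ 1 ζ1 U) (hζ2 : ContDiffOn ℝ 1 ζ2 U)
    (q : Fin 3 → Fin 3 → (Fin 3 → ℝ) → ℝ)
    -- (i) the curl relations `D_l ψ_m = D_m ψ_l`
    (hcurl : ∀ l m : Fin 3, ∀ x ∈ U,
      pdC l (ψ m) x + Complex.I * (A l x : ℂ) * ψ m x =
      pdC m (ψ l) x + Complex.I * (A m x : ℂ) * ψ l x)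
    -- (ii) the curvature relations `∂_l A_m − ∂_m A_l = q_{lm}`
    (hcurv : ∀ l m : Fin 3, ∀ x ∈ U, pdR l (A m) x - pdR m (A l) x = q l m x)
    -- (iii) the formula for `ψ_0`
    (hψ0eq : ∀ x ∈ U,
      ψ 0 x = Complex.I * ((pdC 1 (ψ 1) x + Complex.I * (A 1 x : ℂ) * ψ 1 x)
          + (ε : ℂ) * (pdC 2 (ψ 2) x + Complex.I * (A 2 x : ℂ) * ψ 2 x))
        + (ζ2 x : ℂ) * ψ 1 x - (ε : ℂ) * (ζ1 x : ℂ) * ψ 2 x) :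
    ∀ m : Fin 3, m = 1 ∨ m = 2 → ∀ x ∈ U,
      pdC 0 (ψ m) x
          - Complex.I * (pdC 1 (pdC 1 (ψ m)) x + (ε : ℂ) * pdC 2 (pdC 2 (ψ m)) x) =
        ((ζ2 x - 2 * A 1 x : ℝ) : ℂ) * pdC 1 (ψ m) x
        - (ε : ℂ) * ((ζ1 x + 2 * A 2 x : ℝ) : ℂ) * pdC 2 (ψ m) x
        - (q m 1 x : ℂ) * ψ 1 x - (ε : ℂ) * (q m 2 x : ℂ) * ψ 2 x
        + ψ 1 x * (pdR m ζ2 x : ℂ) - (ε : ℂ) * ψ 2 x * (pdR m ζ1 x : ℂ)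
        + ψ m x * (-(pdR 1 (A 1) x : ℂ) - (ε : ℂ) * (pdR 2 (A 2) x : ℂ)
            - Complex.I * (A 1 x : ℂ) ^ 2 - Complex.I * (ε : ℂ) * (A 2 x : ℂ) ^ 2
            + Complex.I * (ζ2 x : ℂ) * (A 1 x : ℂ)
            - Complex.I * (ε : ℂ) * (ζ1 x : ℂ) * (A 2 x : ℂ)
            - Complex.I * (A 0 x : ℂ)) := by
  intro m hm x hx
  have hU_x : U ∈ 𝓝 x := hU.mem_nhds hx
  have hψ : ∀ l, l = 1 ∨ l = 2 → ContDiffAt ℝ 2 (ψ l) x := by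
    rintro l (rfl | rfl)
    exacts [hψ1.contDiffAt hU_x, hψ2.contDiffAt hU_x]
  have hA_x : ∀ l, DifferentiableAt ℝ (A l) x :=
    fun l => ((hA l).contDiffAt hU_x).differentiableAt one_ne_zero
  have hcurl_near : ∀ l, covD A m (ψ l) =ᶠ[𝓝 x] covD A l (ψ m) :=
    fun l => eventually_of_mem hU_x fun y hy => hcurl m l y hy
  have hswap : ∀ l, l = 1 ∨ l = 2 → covD A m (covD A l (ψ l)) x
      = covD A l (covD A l (ψ m)) x + I * q m l x * ψ l x := fun l hl => by
    rw [covD_covD_of_curl (hψ l hl) (hA_x l) (hA_x m) (hcurl_near l), hcurv m l x hx]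
  have hψ0 : ψ 0 =ᶠ[𝓝 x] timeComponent A ε ζ1 ζ2 (ψ 1) (ψ 2) := by
    filter_upwards [hU_x] with y hy
    rw [hψ0eq y hy, timeComponent, covD, covD]
    ring
  have hDψ0 := (covD_congr hψ0).trans <| covD_timeComponent (m := m) ε (hψ 1 (.inl rfl))
    (hψ 2 (.inr rfl)) (hA_x 1) (hA_x 2) ((hζ1.contDiffAt hU_x).differentiableAt one_ne_zero)
    ((hζ2.contDiffAt hU_x).differentiableAt one_ne_zero)
  rw [hswap 1 (.inl rfl), hswap 2 (.inr rfl), (hcurl_near 1).eq_of_nhds,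
    (hcurl_near 2).eq_of_nhds] at hDψ0
  have h0 : covD A 0 (ψ m) x = covD A m (ψ 0) x := hcurl 0 m x hx
  have hD₁D₁ := covD_covD (l := 1) (hψ m hm) (hA_x 1)
  have hD₂D₂ := covD_covD (l := 2) (hψ m hm) (hA_x 2)
  simp only [covD] at h0 hDψ0 hD₁D₁ hD₂D₂
  push_cast
  linear_combination h0 + hDψ0 + I * hD₁D₁ + I * ε * hD₂D₂
    + (ψ m x * (pdR 1 (A 1) x + ε * pdR 2 (A 2) x)
      + 2 * (A 1 x * pdC 1 (ψ m) x + ε * A 2 x * pdC 2 (ψ m) x)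
      + q m 1 x * ψ 1 x + ε * q m 2 x * ψ 2 x) * I_sq

theorem stmt11 (μ ε : ℝ) (hμ : μ = 1 ∨ μ = -1) (hε : ε = 1 ∨ ε = -1)
    (U : Set (Fin 3 → ℝ)) (hU : IsOpen U)
    (ψ : Fin 3 → (Fin 3 → ℝ) → ℂ)
    (hψ0 : ContDiffOn ℝ 1 (ψ 0) U)
    (hψ1 : ContDiffOn ℝ 2 (ψ 1) U) (hψ2 : ContDiffOn ℝ 2 (ψ 2) U)
    (A : Fin 3 → (Fin 3 → ℝ) → ℝ) (hA : ∀ m, ContDiffOn ℝ 1 (A m) U)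
    (ζ1 ζ2 : (Fin 3 → ℝ) → ℝ) (hζ1 : ContDiffOn ℝ 1 ζ1 U) (hζ2 : ContDiffOn ℝ 1 ζ2 U)
    (q : Fin 3 → Fin 3 → (Fin 3 → ℝ) → ℝ)
    (hq : ∀ l m x, q l m x = μ * (ψ l x * (starRingEnd ℂ) (ψ m x)).im)
    -- (i) the curl relations `D_l ψ_m = D_m ψ_l`
    (hcurl : ∀ l m : Fin 3, ∀ x ∈ U,
      pdC l (ψ m) x + Complex.I * (A l x : ℂ) * ψ m x =
      pdC m (ψ l) x + Complex.I * (A m x : ℂ) * ψ l x)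
    -- (ii) the curvature relations `∂_l A_m − ∂_m A_l = q_{lm}`
    (hcurv : ∀ l m : Fin 3, ∀ x ∈ U, pdR l (A m) x - pdR m (A l) x = q l m x)
    -- (iii) the formula for `ψ_0`
    (hψ0eq : ∀ x ∈ U,
      ψ 0 x = Complex.I * ((pdC 1 (ψ 1) x + Complex.I * (A 1 x : ℂ) * ψ 1 x)
          + (ε : ℂ) * (pdC 2 (ψ 2) x + Complex.I * (A 2 x : ℂ) * ψ 2 x))
        + (ζ2 x : ℂ) * ψ 1 x - (ε : ℂ) * (ζ1 x : ℂ) * ψ 2 x) :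
    ∀ m : Fin 3, m = 1 ∨ m = 2 → ∀ x ∈ U,
      pdC 0 (ψ m) x
          - Complex.I * (pdC 1 (pdC 1 (ψ m)) x + (ε : ℂ) * pdC 2 (pdC 2 (ψ m)) x) =
        ((ζ2 x - 2 * A 1 x : ℝ) : ℂ) * pdC 1 (ψ m) x
        - (ε : ℂ) * ((ζ1 x + 2 * A 2 x : ℝ) : ℂ) * pdC 2 (ψ m) x
        - (q m 1 x : ℂ) * ψ 1 x - (ε : ℂ) * (q m 2 x : ℂ) * ψ 2 x
        + ψ 1 x * (pdR m ζ2 x : ℂ) - (ε : ℂ) * ψ 2 x * (pdR m ζ1 x : ℂ)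
        + ψ m x * (-(pdR 1 (A 1) x : ℂ) - (ε : ℂ) * (pdR 2 (A 2) x : ℂ)
            - Complex.I * (A 1 x : ℂ) ^ 2 - Complex.I * (ε : ℂ) * (A 2 x : ℂ) ^ 2
            + Complex.I * (ζ2 x : ℂ) * (A 1 x : ℂ)
            - Complex.I * (ε : ℂ) * (ζ1 x : ℂ) * (A 2 x : ℂ)
            - Complex.I * (A 0 x : ℂ)) :=
  stmt11_general ε U hU ψ hψ1 hψ2 A hA ζ1 ζ2 hζ1 hζ2 q hcurl hcurv hψ0eq
end
end

section
/- Let μ ∈ {−1,1}, let I ⊆ ℝ be an open interval containing 0, let ψ_0 : I → ℂ and A_0 : I → ℝ be continuous, and let s, v, w : I → ℝ³ be differentiable maps satisfying for all t ∈ I the ODE system: s'(t) = Re(ψ_0(t)) v(t) + Im(ψ_0(t)) w(t), v'(t) = −μ Re(ψ_0(t)) s(t) + A_0(t) w(t), w'(t) = −μ Im(ψ_0(t)) s(t) − A_0(t) v(t). If at t = 0 one has v ·_μ s = 0, w ·_μ s = 0, v ·_μ w = 0, μ (s ·_μ s) = 1, v ·_μ v = 1, and w ·_μ w = 1, then these six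 identities hold for all t ∈ I. -/
/-!
The six identities say that `(s, v, w)` is orthonormal for `·_μ`, with `s` normalised to
`μ (s ·_μ s) = 1`. Along the frame equations the deviations of the six Gram entries from these
values satisfy a homogeneous linear ODE with continuous coefficients (built from `Re ψ₀`, `Im ψ₀`
and `A₀`), so they vanish on all of `I` once they vanish at `0`: on each compact subinterval the
coefficients are bounded and ODE uniqueness applies.
-/

noncomputable section

open Set

theorem ODE_linear_solution_eqOn_zero {E : Type*} [NormedAddCommGroup E] [NormedSpace ℝ E]
    {I : Set ℝ} (hI : I.OrdConnected) {A : ℝ → E →L[ℝ] E} (hA : ContinuousOn A I)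
    {f : ℝ → E} (hf : ∀ t ∈ I, HasDerivAt f (A t (f t)) t) {t₀ : ℝ} (ht₀ : t₀ ∈ I)
    (hf₀ : f t₀ = 0) : EqOn f 0 I := by
  intro t ht
  have hJ : uIcc t₀ t ⊆ I := hI.uIcc_subset ht₀ ht
  obtain ⟨C, hC⟩ := isCompact_uIcc.exists_bound_of_continuousOn (hA.mono hJ)
  have hlip : ∀ u ∈ uIcc t₀ t, LipschitzOnWith C.toNNReal (A u) univ := fun u hu =>
    ((A u).lipschitz.weaken (by simpa using Real.toNNReal_le_toNNReal (hC u hu))).lipschitzOnWith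
  have hfc : ContinuousOn f (uIcc t₀ t) := fun u hu =>
    (hf u (hJ hu)).continuousAt.continuousWithinAt
  have hf' : ∀ u ∈ uIcc t₀ t, ∀ J, HasDerivWithinAt f (A u (f u)) J u := fun u hu _ =>
    (hf u (hJ hu)).hasDerivWithinAt
  have h0' : ∀ u : ℝ, ∀ J, HasDerivWithinAt (0 : ℝ → E) (A u ((0 : ℝ → E) u)) J u := fun u J =>
    (hasDerivWithinAt_const u J (0 : E)).congr_deriv (by simp)
  rcases le_total t₀ t with h | h
  · rw [uIcc_of_le h] at hlip hfc hf'
    exact ODE_solution_unique_of_mem_Icc_right (s := fun _ => univ)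
      (fun u hu => hlip u (Ico_subset_Icc_self hu)) hfc
      (fun u hu => hf' u (Ico_subset_Icc_self hu) _) (fun _ _ => mem_univ _)
      continuousOn_const (fun u _ => h0' u _) (fun _ _ => mem_univ _) hf₀ ⟨h, le_rfl⟩
  · rw [uIcc_of_ge h] at hlip hfc hf'
    exact ODE_solution_unique_of_mem_Icc_left (s := fun _ => univ)
      (fun u hu => hlip u (Ioc_subset_Icc_self hu)) hfc
      (fun u hu => hf' u (Ioc_subset_Icc_self hu) _) (fun _ _ => mem_univ _)
      continuousOn_const (fun u _ => h0' u _) (fun _ _ => mem_univ _) hf₀ ⟨le_rfl, h⟩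

theorem hasDerivAt_mdot {μ : ℝ} {x y : ℝ → Fin 3 → ℝ} {x' y' : Fin 3 → ℝ} {t : ℝ}
    (hx : HasDerivAt x x' t) (hy : HasDerivAt y y' t) :
    HasDerivAt (fun u => mdot μ (x u) (y u)) (mdot μ x' (y t) + mdot μ (x t) y') t := by
  have hcoord (i : Fin 3) := (hasDerivAt_pi.1 hx i).fun_mul (hasDerivAt_pi.1 hy i)
  exact ((((hcoord 0).const_mul μ).fun_add (hcoord 1)).fun_add (hcoord 2)
    |>.congr_of_eventuallyEq (.of_forall fun u => by simp only [mdot]; ring)).congr_deriv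
    (by simp only [mdot]; ring)

def gramDefect (μ : ℝ) (s v w : Fin 3 → ℝ) : Fin 6 → ℝ :=
  ![mdot μ v s, mdot μ w s, mdot μ v w,
    μ * mdot μ s s - 1, mdot μ v v - 1, mdot μ w w - 1]

theorem hasDerivAt_gramDefect {μ t : ℝ} {s v w : ℝ → Fin 3 → ℝ} {s' v' w' : Fin 3 → ℝ}
    (hs : HasDerivAt s s' t) (hv : HasDerivAt v v' t) (hw : HasDerivAt w w' t) :
    HasDerivAt (fun u => gramDefect μ (s u) (v u) (w u))
      ![mdot μ v' (s t) + mdot μ (v t) s', mdot μ w' (s t) + mdot μ (w t) s',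
        mdot μ v' (w t) + mdot μ (v t) w', μ * (mdot μ s' (s t) + mdot μ (s t) s'),
        mdot μ v' (v t) + mdot μ (v t) v', mdot μ w' (w t) + mdot μ (w t) w'] t := by
  refine hasDerivAt_pi.2 fun i => ?_
  fin_cases i
  exacts [hasDerivAt_mdot hv hs, hasDerivAt_mdot hw hs, hasDerivAt_mdot hv hw,
    ((hasDerivAt_mdot hs hs).const_mul μ).sub_const 1, (hasDerivAt_mdot hv hv).sub_const 1,
    (hasDerivAt_mdot hw hw).sub_const 1]

open ContinuousLinearMap in
def gramDefectOp (μ p q a : ℝ) : (Fin 6 → ℝ) →L[ℝ] Fin 6 → ℝ :=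
  let coord : Fin 6 → (Fin 6 → ℝ) →L[ℝ] ℝ := proj
  p • pi ![coord 4 - coord 3, coord 2, -μ • coord 1, (2 * μ) • coord 0, (-2 * μ) • coord 0, 0] +
  q • pi ![coord 2, coord 5 - coord 3, -μ • coord 0, (2 * μ) • coord 1, 0, (-2 * μ) • coord 1] +
  a • pi ![coord 1, -coord 0, coord 5 - coord 4, 0, 2 • coord 2, -2 • coord 2]

open ContinuousLinearMap in
theorem hasDerivAt_gramDefect_of_frame {μ p q a t : ℝ} {s v w : ℝ → Fin 3 → ℝ}
    (hs : HasDerivAt s (p • v t + q • w t) t)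
    (hv : HasDerivAt v ((-(μ * p)) • s t + a • w t) t)
    (hw : HasDerivAt w ((-(μ * q)) • s t + (-a) • v t) t) :
    HasDerivAt (fun u => gramDefect μ (s u) (v u) (w u))
      (gramDefectOp μ p q a (gramDefect μ (s t) (v t) (w t))) t := by
  refine (hasDerivAt_gramDefect hs hv hw).congr_deriv ?_
  funext i
  fin_cases i <;>
    simp only [gramDefectOp, gramDefect, mdot, add_apply, smul_apply, sub_apply, neg_apply,
      zero_apply, coe_pi', proj_apply, Pi.add_apply, Pi.smul_apply, smul_eq_mul, Fin.zero_eta,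
      Fin.mk_one, Fin.reduceFinMk, Matrix.cons_val_zero, Matrix.cons_val_one, Matrix.cons_val] <;>
    ring

theorem continuousOn_gramDefectOp {μ : ℝ} {I : Set ℝ} {p q a : ℝ → ℝ} (hp : ContinuousOn p I)
    (hq : ContinuousOn q I) (ha : ContinuousOn a I) :
    ContinuousOn (fun t => gramDefectOp μ (p t) (q t) (a t)) I := by
  unfold gramDefectOp; fun_prop

theorem gramDefect_eq_zero_iff {μ : ℝ} {s v w : Fin 3 → ℝ} :
    gramDefect μ s v w = 0 ↔
      mdot μ v s = 0 ∧ mdot μ w s = 0 ∧ mdot μ v w = 0 ∧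
      μ * mdot μ s s = 1 ∧ mdot μ v v = 1 ∧ mdot μ w w = 1 := by
  simp [gramDefect, funext_iff, Fin.forall_fin_succ, sub_eq_zero]

theorem stmt15_general (μ : ℝ)
    (I : Set ℝ) (hIconv : Convex ℝ I) (h0I : (0 : ℝ) ∈ I)
    (ψ0 : ℝ → ℂ) (hψ0 : ContinuousOn ψ0 I)
    (A0 : ℝ → ℝ) (hA0 : ContinuousOn A0 I)
    (s v w : ℝ → (Fin 3 → ℝ))
    (hs : ∀ t ∈ I, HasDerivAt s ((ψ0 t).re • v t + (ψ0 t).im • w t) t)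
    (hv : ∀ t ∈ I, HasDerivAt v ((-(μ * (ψ0 t).re)) • s t + A0 t • w t) t)
    (hw : ∀ t ∈ I, HasDerivAt w ((-(μ * (ψ0 t).im)) • s t + (-(A0 t)) • v t) t)
    (hvs0 : mdot μ (v 0) (s 0) = 0)
    (hws0 : mdot μ (w 0) (s 0) = 0)
    (hvw0 : mdot μ (v 0) (w 0) = 0)
    (hss0 : μ * mdot μ (s 0) (s 0) = 1)
    (hvv0 : mdot μ (v 0) (v 0) = 1)
    (hww0 : mdot μ (w 0) (w 0) = 1) :
    ∀ t ∈ I,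
      mdot μ (v t) (s t) = 0 ∧ mdot μ (w t) (s t) = 0 ∧ mdot μ (v t) (w t) = 0 ∧
      μ * mdot μ (s t) (s t) = 1 ∧ mdot μ (v t) (v t) = 1 ∧
      mdot μ (w t) (w t) = 1 := by
  have hcoeff : ContinuousOn (fun t => gramDefectOp μ (ψ0 t).re (ψ0 t).im (A0 t)) I :=
    continuousOn_gramDefectOp (Complex.continuous_re.comp_continuousOn hψ0)
      (Complex.continuous_im.comp_continuousOn hψ0) hA0
  have hdefect := ODE_linear_solution_eqOn_zero hIconv.ordConnected hcoeff
    (fun t ht => hasDerivAt_gramDefect_of_frame (hs t ht) (hv t ht) (hw t ht)) h0I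
    (gramDefect_eq_zero_iff.2 ⟨hvs0, hws0, hvw0, hss0, hvv0, hww0⟩)
  exact fun t ht => gramDefect_eq_zero_iff.1 (hdefect ht)

theorem stmt15 (μ : ℝ) (hμ : μ = 1 ∨ μ = -1)
    (I : Set ℝ) (hIopen : IsOpen I) (hIconv : Convex ℝ I) (h0I : (0 : ℝ) ∈ I)
    (ψ0 : ℝ → ℂ) (hψ0 : ContinuousOn ψ0 I)
    (A0 : ℝ → ℝ) (hA0 : ContinuousOn A0 I)
    (s v w : ℝ → (Fin 3 → ℝ))
    (hs : ∀ t ∈ I, HasDerivAt s ((ψ0 t).re • v t + (ψ0 t).im • w t) t)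
    (hv : ∀ t ∈ I, HasDerivAt v ((-(μ * (ψ0 t).re)) • s t + A0 t • w t) t)
    (hw : ∀ t ∈ I, HasDerivAt w ((-(μ * (ψ0 t).im)) • s t + (-(A0 t)) • v t) t)
    (hvs0 : mdot μ (v 0) (s 0) = 0)
    (hws0 : mdot μ (w 0) (s 0) = 0)
    (hvw0 : mdot μ (v 0) (w 0) = 0)
    (hss0 : μ * mdot μ (s 0) (s 0) = 1)
    (hvv0 : mdot μ (v 0) (v 0) = 1)
    (hww0 : mdot μ (w 0) (w 0) = 1) :
    ∀ t ∈ I,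
      mdot μ (v t) (s t) = 0 ∧ mdot μ (w t) (s t) = 0 ∧ mdot μ (v t) (w t) = 0 ∧
      μ * mdot μ (s t) (s t) = 1 ∧ mdot μ (v t) (v t) = 1 ∧
      mdot μ (w t) (w t) = 1 :=
  stmt15_general μ I hIconv h0I ψ0 hψ0 A0 hA0 s v w hs hv hw hvs0 hws0 hvw0 hss0 hvv0 hww0
end
end
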